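/- arXiv:1412.0795 — 5 statements merged into one kernel-verified Lean document; each statement's English description precedes it below -/
import Mathlib

section
/- Let D be a complex m×m matrix, and let L, K be positive reals. If every diagonal entry of D equals L and the sum of squared absolute values of the off-diagonal entries is at most K, then rank(D) ≥ m − K/L². -/
/-!
Let `P` be the orthogonal projection onto the column space of `D`. Then `P * D = D`, so
`tr D = tr (P * D)`, and Cauchy–Schwarz for the Frobenius pairing gives
`|tr D|² ≤ ‖P‖_F² ‖D‖_F² = tr P · ‖D‖_F² = rank D · ‖D‖_F²`, since `Pᴴ P = P`.
Here `tr D = m L` and `‖D‖_F² ≤ m L² + K`, so `m² L² ≤ rank D · (m L² + K)`, which rearranges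
to `m - K / L² ≤ rank D`.
-/

open Finset

namespace Matrix

variable {m n : Type*} [Fintype m] [Fintype n]

theorem norm_trace_mul_sq_le {α : Type*} [NormedRing α] (A : Matrix m n α) (B : Matrix n m α) :
    ‖(A * B).trace‖ ^ 2 ≤ (∑ i, ∑ j, ‖A i j‖ ^ 2) * ∑ j, ∑ i, ‖B j i‖ ^ 2 := by
  have hnorm : ‖(A * B).trace‖ ≤ ∑ i, ∑ j, ‖A i j‖ * ‖B j i‖ := by
    simp only [trace, diag, mul_apply]
    exact (norm_sum_le _ _).trans <| sum_le_sum fun i _ =>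
      (norm_sum_le _ _).trans <| sum_le_sum fun j _ => norm_mul_le _ _
  have hcs := sum_mul_sq_le_sq_mul_sq univ (fun p : m × n => ‖A p.1 p.2‖) fun p => ‖B p.2 p.1‖
  simp only [← univ_product_univ, sum_product] at hcs
  rw [sum_comm (f := fun (j : n) (i : m) => ‖B j i‖ ^ 2)]
  exact (pow_le_pow_left₀ (norm_nonneg _) hnorm 2).trans hcs

variable {𝕜 : Type*} [RCLike 𝕜]

theorem trace_conjTranspose_mul_self (A : Matrix m n 𝕜) :
    (Aᴴ * A).trace = ((∑ i, ∑ j, ‖A i j‖ ^ 2 : ℝ) : 𝕜) := by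
  simp only [trace, diag, mul_apply, conjTranspose_apply, RCLike.star_def, RCLike.conj_mul]
  push_cast
  exact sum_comm

theorem exists_isStarProjection_mul_eq_self [DecidableEq m] [DecidableEq n] (A : Matrix m n 𝕜) :
    ∃ P : Matrix m m 𝕜, IsStarProjection P ∧ P * A = A ∧ P.trace = A.rank := by
  set V := LinearMap.range (toEuclideanLin A)
  set P := (toEuclideanCLM (n := m) (𝕜 := 𝕜)).symm V.starProjection
  have hP : toEuclideanLin P = V.starProjection := by
    rw [← coe_toEuclideanCLM_eq_toEuclideanLin, StarAlgEquiv.apply_symm_apply]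
  have hrange : LinearMap.range (V.starProjection : EuclideanSpace 𝕜 m →ₗ[𝕜] _) = V :=
    V.range_starProjection
  refine ⟨P, isStarProjection_starProjection.map (toEuclideanCLM (n := m) (𝕜 := 𝕜)).symm, ?_, ?_⟩
  · apply toEuclideanLin.injective
    ext1 x
    rw [toLpLin_mul_same, LinearMap.comp_apply, hP]
    exact V.starProjection_eq_self_iff.mpr (LinearMap.mem_range_self _ x)
  · have hidem := ContinuousLinearMap.IsIdempotentElem.toLinearMap V.isIdempotentElem_starProjection
    rw [← trace_toLin_eq P (PiLp.basisFun 2 𝕜 m), ← toLpLin_eq_toLin, hP,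
      (LinearMap.IsIdempotentElem.isProj_range _ hidem).trace, hrange,
      rank_eq_finrank_range_toLin A (PiLp.basisFun 2 𝕜 m) (PiLp.basisFun 2 𝕜 n), ← toLpLin_eq_toLin]

theorem norm_trace_sq_le_rank_mul [DecidableEq n] (A : Matrix n n 𝕜) :
    ‖A.trace‖ ^ 2 ≤ A.rank * ∑ i, ∑ j, ‖A i j‖ ^ 2 := by
  obtain ⟨P, hP, hPA, htrace⟩ := A.exists_isStarProjection_mul_eq_self
  have hPnorm : ∑ i, ∑ j, ‖P i j‖ ^ 2 = A.rank := by
    have h := P.trace_conjTranspose_mul_self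
    rw [← star_eq_conjTranspose, hP.isSelfAdjoint.star_eq, hP.isIdempotentElem.eq, htrace] at h
    exact_mod_cast h.symm
  calc ‖A.trace‖ ^ 2 = ‖(P * A).trace‖ ^ 2 := by rw [hPA]
    _ ≤ _ := P.norm_trace_mul_sq_le A
    _ = _ := by rw [hPnorm]

end Matrix

open Matrix

theorem stmt_0_general (m : ℕ) (D : Matrix (Fin m) (Fin m) ℂ) (L K : ℝ)
    (hL : 0 < L)
    (hdiag : ∀ i, D i i = (L : ℂ))
    (hoff : ∑ i : Fin m, ∑ j ∈ Finset.univ \ {i}, ‖D i j‖ ^ 2 ≤ K) :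
    (m : ℝ) - K / L ^ 2 ≤ (D.rank : ℝ) := by
  set S := ∑ i : Fin m, ∑ j ∈ Finset.univ \ {i}, ‖D i j‖ ^ 2
  have htrace : ‖D.trace‖ = m * L := by
    simp [trace, hdiag, abs_of_pos hL]
  have hfrob : ∑ i, ∑ j, ‖D i j‖ ^ 2 = m * L ^ 2 + S := by
    have hrow (i : Fin m) : ∑ j, ‖D i j‖ ^ 2 = L ^ 2 + ∑ j ∈ univ \ {i}, ‖D i j‖ ^ 2 := by
      rw [← add_sum_erase _ _ (mem_univ i), sdiff_singleton_eq_erase, hdiag, Complex.norm_real,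
        Real.norm_of_nonneg hL.le]
    rw [sum_congr rfl fun i _ => hrow i, sum_add_distrib, sum_const, card_univ, Fintype.card_fin,
      nsmul_eq_mul]
  have hS : 0 ≤ S := by positivity
  have hkey := D.norm_trace_sq_le_rank_mul
  rw [htrace, hfrob] at hkey
  have hL2 : 0 < L ^ 2 := by positivity
  have hrank : (0 : ℝ) ≤ D.rank := Nat.cast_nonneg _
  -- with `x = m L²`, `y = rank D · L²`: `x² ≤ y (x + S)` and `S ≥ 0` force `x - S ≤ y`
  have hmS : (m : ℝ) * L ^ 2 - S ≤ D.rank * L ^ 2 := by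
    nlinarith [mul_le_mul_of_nonneg_right hkey hL2.le, mul_nonneg hS hrank, mul_nonneg hrank hL2.le]
  calc (m : ℝ) - K / L ^ 2 ≤ m - S / L ^ 2 := by gcongr
    _ = (m * L ^ 2 - S) / L ^ 2 := by field_simp
    _ ≤ D.rank := (div_le_iff₀ hL2).mpr hmS

theorem stmt_0 (m : ℕ) (D : Matrix (Fin m) (Fin m) ℂ) (L K : ℝ)
    (hL : 0 < L) (hK : 0 < K)
    (hdiag : ∀ i, D i i = (L : ℂ))
    (hoff : ∑ i : Fin m, ∑ j ∈ Finset.univ \ {i}, ‖D i j‖ ^ 2 ≤ K) :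
    (m : ℝ) - K / L ^ 2 ≤ (D.rank : ℝ) :=
  stmt_0_general m D L K hL hdiag hoff
end

section
/- Let V₁,…,V_n ⊆ ℝ^ℓ and S₁,…,S_w ⊆ [n] be a list of sets of size 2 or 3 satisfying the dependency and α-multiplicity conditions of an (α,δ)-system, with w ≥ δn². Then there exists a subset of indices of size at least δn/(2α), and a sublist of the sets, forming an (α, δ/2)-system on the corresponding sublist of spaces. -/
open Finset

theorem stmt_5 (ℓ n w α : ℕ) (δ : ℝ) (hα : 0 < α) (hδ : 0 < δ)
    (V : Fin n → Submodule ℝ (EuclideanSpace ℝ (Fin ℓ))) (S : Fin w → Finset (Fin n))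
    (hsize : ∀ j, (S j).card = 2 ∨ (S j).card = 3)
    (hdep3 : ∀ j, ∀ i₁ ∈ S j, ∀ i₂ ∈ S j, ∀ i₃ ∈ S j, i₁ ≠ i₂ → i₁ ≠ i₃ → i₂ ≠ i₃ →
      V i₁ ≤ V i₂ ⊔ V i₃)
    (hdep2 : ∀ j, (S j).card = 2 → ∀ i₁ ∈ S j, ∀ i₂ ∈ S j, V i₁ = V i₂)
    (hpair : ∀ i₁ i₂ : Fin n, i₁ ≠ i₂ →
      (Finset.univ.filter fun j => i₁ ∈ S j ∧ i₂ ∈ S j).card ≤ α)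
    (hw : δ * n ^ 2 ≤ (w : ℝ)) :
    ∃ (T : Finset (Fin n)) (J : Finset (Fin w)),
      δ * n / (2 * α) ≤ (T.card : ℝ) ∧
      (∀ j ∈ J, S j ⊆ T) ∧
      (∀ i ∈ T, (δ / 2) * T.card ≤ ((J.filter fun j => i ∈ S j).card : ℝ)) ∧
      (∀ i₁ ∈ T, ∀ i₂ ∈ T, i₁ ≠ i₂ →
        (J.filter fun j => i₁ ∈ S j ∧ i₂ ∈ S j).card ≤ α) := by
  classical
  set JT : Finset (Fin n) → Finset (Fin w) :=
    fun T => univ.filter (fun j => S j ⊆ T) with hJT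
  have key : ∀ m : ℕ, ∀ T : Finset (Fin n), T.card ≤ m →
      δ * n ^ 2 ≤ ((JT T).card : ℝ) + ((n : ℝ) - T.card) * (δ * n / 2) →
      ∃ T' ⊆ T,
        (∀ i ∈ T', δ * n / 2 ≤ (((JT T').filter (fun j => i ∈ S j)).card : ℝ)) ∧
        δ * n ^ 2 ≤ ((JT T').card : ℝ) + ((n : ℝ) - T'.card) * (δ * n / 2) := by
    intro m
    induction m with
    | zero =>
      intro T hT hinv
      have : T = ∅ := Finset.card_eq_zero.mp (Nat.le_zero.mp hT)
      subst this
      exact ⟨∅, subset_rfl, fun i hi => absurd hi (Finset.notMem_empty i), hinv⟩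
    | succ m ih =>
      intro T hT hinv
      by_cases hgood : ∀ i ∈ T, δ * n / 2 ≤ (((JT T).filter (fun j => i ∈ S j)).card : ℝ)
      · exact ⟨T, subset_rfl, hgood, hinv⟩
      · push_neg at hgood
        obtain ⟨i, hiT, hdeg⟩ := hgood
        have hcard : (T.erase i).card = T.card - 1 := Finset.card_erase_of_mem hiT
        have hcard1 : 1 ≤ T.card := Finset.card_pos.mpr ⟨i, hiT⟩
        -- J(erase) = J(T) minus those containing i
        have hset : JT (T.erase i) = (JT T).filter (fun j => i ∉ S j) := by
          ext j
          simp only [hJT, Finset.mem_filter, Finset.mem_univ, true_and,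
            Finset.subset_erase, and_assoc]
        have hsplit : (((JT T).filter (fun j => i ∈ S j)).card : ℝ)
            + (((JT T).filter (fun j => i ∉ S j)).card : ℝ) = ((JT T).card : ℝ) := by
          rw [← Nat.cast_add]
          norm_cast
          exact Finset.card_filter_add_card_filter_not (fun j => i ∈ S j)
        have hinv' : δ * n ^ 2 ≤ ((JT (T.erase i)).card : ℝ)
            + ((n : ℝ) - (T.erase i).card) * (δ * n / 2) := by
          rw [hset, hcard]
          have hc : ((T.card - 1 : ℕ) : ℝ) = (T.card : ℝ) - 1 := by
            push_cast [hcard1]; ring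
          rw [hc]
          nlinarith [hsplit, hdeg, hinv]
        obtain ⟨T', hT'sub, hdeg', hinv''⟩ := ih (T.erase i)
          (by omega) hinv'
        exact ⟨T', hT'sub.trans (Finset.erase_subset i T), hdeg', hinv''⟩
  have hn_le : ∀ T : Finset (Fin n), (T.card : ℝ) ≤ n := by
    intro T
    exact_mod_cast (Finset.card_le_univ T).trans_eq (by simp)
  have hinv0 : δ * n ^ 2 ≤ ((JT univ).card : ℝ)
      + ((n : ℝ) - (univ : Finset (Fin n)).card) * (δ * n / 2) := by
    have : JT univ = univ := by
      ext j; simp [hJT]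
    rw [this]
    simp only [Finset.card_univ, Fintype.card_fin]
    have h0 : ((n : ℝ) - n) * (δ * n / 2) = 0 := by ring
    linarith [hw]
  obtain ⟨T, -, hdeg, hinv⟩ := key (univ : Finset (Fin n)).card univ le_rfl hinv0
  refine ⟨T, JT T, ?_, ?_, ?_, ?_⟩
  · -- size bound
    rcases Finset.eq_empty_or_nonempty T with rfl | ⟨i, hiT⟩
    · -- T empty: then n = 0
      have hJe : JT (∅ : Finset (Fin n)) = ∅ := by
        ext j
        simp only [hJT, Finset.mem_filter, Finset.mem_univ, true_and,
          Finset.subset_empty, Finset.notMem_empty, iff_false]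
        intro h
        rcases hsize j with h2 | h2 <;> rw [h] at h2 <;> simp at h2
      rw [hJe] at hinv
      simp only [Finset.card_empty, Nat.cast_zero] at hinv ⊢
      have hn2 : (n : ℝ) ^ 2 ≤ 0 := by nlinarith [hinv, hδ]
      have hn0 : (n : ℝ) = 0 :=
        pow_eq_zero_iff (n := 2) (by norm_num) |>.mp
          (le_antisymm hn2 (sq_nonneg _))
      rw [hn0]
      simp
    · -- T nonempty: pair counting
      have hsub : (JT T).filter (fun j => i ∈ S j) ⊆
          (T.erase i).biUnion (fun i' => univ.filter (fun j => i ∈ S j ∧ i' ∈ S j)) := by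
        intro j hj
        simp only [hJT, Finset.mem_filter, Finset.mem_univ, true_and] at hj
        obtain ⟨hjT, hij⟩ := hj
        have h2 : 1 < (S j).card := by rcases hsize j with h | h <;> omega
        obtain ⟨i', hi'S, hi'ne⟩ := Finset.exists_mem_ne h2 i
        refine Finset.mem_biUnion.mpr ⟨i', Finset.mem_erase.mpr ⟨hi'ne, hjT hi'S⟩, ?_⟩
        simp [hij, hi'S]
      have hb : ((JT T).filter (fun j => i ∈ S j)).card ≤ (T.erase i).card * α := by
        calc ((JT T).filter (fun j => i ∈ S j)).card
            ≤ ((T.erase i).biUnion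
              (fun i' => univ.filter (fun j => i ∈ S j ∧ i' ∈ S j))).card :=
              Finset.card_le_card hsub
          _ ≤ ∑ i' ∈ T.erase i, (univ.filter (fun j => i ∈ S j ∧ i' ∈ S j)).card :=
              Finset.card_biUnion_le
          _ ≤ ∑ _i' ∈ T.erase i, α := by
              apply Finset.sum_le_sum
              intro i' hi'
              exact hpair i i' (Finset.mem_erase.mp hi').1.symm
          _ = (T.erase i).card * α := by rw [Finset.sum_const, smul_eq_mul]
      have hb' : (((JT T).filter (fun j => i ∈ S j)).card : ℝ) ≤ (T.card : ℝ) * α := by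
        have : ((T.erase i).card : ℝ) ≤ T.card := by
          exact_mod_cast Finset.card_le_card (Finset.erase_subset i T)
        calc (((JT T).filter (fun j => i ∈ S j)).card : ℝ)
            ≤ ((T.erase i).card : ℝ) * α := by exact_mod_cast hb
          _ ≤ (T.card : ℝ) * α := by
              apply mul_le_mul_of_nonneg_right this (by positivity)
      have hd := hdeg i hiT
      have hα' : (0 : ℝ) < α := by exact_mod_cast hα
      rw [div_le_iff₀ (by positivity)]
      nlinarith [hd, hb']
  · intro j hj
    simp only [hJT, Finset.mem_filter] at hj
    exact hj.2
  · intro i hiT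
    have h1 : (δ / 2) * T.card ≤ δ * n / 2 := by
      have := hn_le T
      nlinarith
    exact h1.trans (hdeg i hiT)
  · intro i₁ h₁ i₂ h₂ hne
    refine le_trans (Finset.card_le_card ?_) (hpair i₁ i₂ hne)
    intro j hj
    simp only [Finset.mem_filter] at hj ⊢
    exact ⟨Finset.mem_univ j, hj.2⟩
end

section
/- For any finite set A with r ≥ 3 elements, there exists a multiset of r² − r triples of distinct elements of A such that every element of A appears in exactly 3(r−1) triples, and every pair of distinct elements of A appears together in at most 6 triples. -/
open Function

lemma iq_transport {B A : Type*} (e : B ≃ A) (g0 : B → B → B)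
    (h1 : ∀ x, Function.Bijective (g0 x))
    (h2 : ∀ y, Function.Bijective (fun x => g0 x y))
    (h3 : ∀ x, g0 x x = x) :
    ∃ g : A → A → A, (∀ x, Function.Bijective (g x)) ∧
      (∀ y, Function.Bijective (fun x => g x y)) ∧ (∀ x, g x x = x) := by
  refine ⟨fun x y => e (g0 (e.symm x) (e.symm y)), ?_, ?_, ?_⟩
  · intro x
    exact e.bijective.comp ((h1 _).comp e.symm.bijective)
  · intro y
    have : (fun x => e (g0 (e.symm x) (e.symm y)))
        = e ∘ (fun z => g0 z (e.symm y)) ∘ e.symm := rfl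
    rw [this]
    exact e.bijective.comp ((h2 _).comp e.symm.bijective)
  · intro x; simp [h3]

lemma iq_odd (k : ℕ) :
    ∃ g : ZMod (2*k+1) → ZMod (2*k+1) → ZMod (2*k+1),
      (∀ x, Function.Bijective (g x)) ∧
      (∀ y, Function.Bijective (fun x => g x y)) ∧ (∀ x, g x x = x) := by
  haveI : NeZero (2*k+1) := ⟨by omega⟩
  set c : ZMod (2*k+1) := (k : ZMod (2*k+1)) + 1 with hcdef
  have two_c : 2 * c = 1 := by
    have h := ZMod.natCast_self (2*k+1)
    push_cast at h
    rw [hcdef]; linear_combination h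
  have hc : ∀ x y : ZMod (2*k+1), c * x = c * y → x = y := by
    intro x y h
    have h2 : (2*c) * x = (2*c) * y := by rw [mul_assoc, mul_assoc, h]
    rwa [two_c, one_mul, one_mul] at h2
  refine ⟨fun i j => c * (i + j), ?_, ?_, ?_⟩
  · intro i
    rw [← Finite.injective_iff_bijective]
    intro j1 j2 h
    exact add_left_cancel (hc _ _ h)
  · intro j
    rw [← Finite.injective_iff_bijective]
    intro i1 i2 h
    exact add_right_cancel (hc _ _ h)
  · intro i
    have : c * (i + i) = i := by linear_combination i * two_c
    exact this

def Ge (k : ℕ) : Option (ZMod (2*k+3)) → Option (ZMod (2*k+3)) → Option (ZMod (2*k+3))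
  | some i, some j => if j = i + 1 then none else some (((k : ZMod (2*k+3)) + 2) * (i + j))
  | some i, none => some (i + ((k : ZMod (2*k+3)) + 2))
  | none, some j => some (j - ((k : ZMod (2*k+3)) + 2))
  | none, none => none

lemma iq_even (k : ℕ) :
    ∃ g : Option (ZMod (2*k+3)) → Option (ZMod (2*k+3)) → Option (ZMod (2*k+3)),
      (∀ x, Function.Bijective (g x)) ∧
      (∀ y, Function.Bijective (fun x => g x y)) ∧ (∀ x, g x x = x) := by
  haveI : NeZero (2*k+3) := ⟨by omega⟩
  haveI : Fact (1 < 2*k+3) := ⟨by omega⟩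
  set c : ZMod (2*k+3) := (k : ZMod (2*k+3)) + 2 with hcdef
  have two_c : 2 * c = 1 := by
    have h := ZMod.natCast_self (2*k+3)
    push_cast at h
    rw [hcdef]; linear_combination h
  have hc : ∀ x y : ZMod (2*k+3), c * x = c * y → x = y := by
    intro x y h
    have h2 : (2*c) * x = (2*c) * y := by rw [mul_assoc, mul_assoc, h]
    rwa [two_c, one_mul, one_mul] at h2
  have hone : (1 : ZMod (2*k+3)) ≠ 0 := one_ne_zero
  refine ⟨Ge k, ?_, ?_, ?_⟩
  · intro x
    rw [← Finite.injective_iff_bijective]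
    intro y1 y2 h
    match x, y1, y2 with
    | some i, some j1, some j2 =>
      by_cases h1 : j1 = i + 1 <;> by_cases h2 : j2 = i + 1
      · rw [h1, h2]
      · simp [Ge, h1, h2] at h
      · simp [Ge, h1, h2] at h
      · simp only [Ge, if_neg h1, if_neg h2, Option.some.injEq] at h
        rw [add_left_cancel (hc _ _ h)]
    | some i, some j, none =>
      by_cases h1 : j = i + 1
      · simp [Ge, h1] at h
      · exfalso
        simp only [Ge, if_neg h1, Option.some.injEq] at h
        have hv2 : c * (i + (i+1)) = i + c := by linear_combination i * two_c
        exact h1 (add_left_cancel (hc _ _ (h.trans hv2.symm)))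
    | some i, none, some j =>
      by_cases h1 : j = i + 1
      · simp [Ge, h1] at h
      · exfalso
        simp only [Ge, if_neg h1, Option.some.injEq] at h
        have hv2 : c * (i + (i+1)) = i + c := by linear_combination i * two_c
        exact h1 (add_left_cancel (hc _ _ (h.symm.trans hv2.symm)))
    | some i, none, none => rfl
    | none, some j1, some j2 =>
      simp only [Ge, Option.some.injEq] at h
      have : j1 = j2 := by linear_combination h
      rw [this]
    | none, some j, none => simp [Ge] at h
    | none, none, some j => simp [Ge] at h
    | none, none, none => rfl
  · intro y
    rw [← Finite.injective_iff_bijective]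
    intro x1 x2 h
    match y, x1, x2 with
    | some j, some i1, some i2 =>
      by_cases h1 : j = i1 + 1 <;> by_cases h2 : j = i2 + 1
      · have h3 : i1 + 1 = i2 + 1 := h1.symm.trans h2
        rw [add_right_cancel h3]
      · simp only [Ge, if_pos h1, if_neg h2] at h
        exact absurd h (by simp)
      · simp only [Ge, if_neg h1, if_pos h2] at h
        exact absurd h (by simp)
      · simp only [Ge, if_neg h1, if_neg h2, Option.some.injEq] at h
        rw [add_right_cancel (hc _ _ h)]
    | some j, some i, none =>
      by_cases h1 : j = i + 1
      · simp [Ge, h1] at h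
      · exfalso
        simp only [Ge, if_neg h1, Option.some.injEq] at h
        have hv2 : c * ((j - 1) + j) = j - c := by linear_combination j * two_c
        have h3 := add_right_cancel (hc _ _ (h.trans hv2.symm))
        exact h1 (by rw [h3]; ring)
    | some j, none, some i =>
      by_cases h1 : j = i + 1
      · simp [Ge, h1] at h
      · exfalso
        simp only [Ge, if_neg h1, Option.some.injEq] at h
        have hv2 : c * ((j - 1) + j) = j - c := by linear_combination j * two_c
        have h3 := add_right_cancel (hc _ _ (h.symm.trans hv2.symm))
        exact h1 (by rw [h3]; ring)
    | some j, none, none => rfl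
    | none, some i1, some i2 =>
      simp only [Ge, Option.some.injEq] at h
      rw [add_right_cancel h]
    | none, some i, none => simp [Ge] at h
    | none, none, some i => simp [Ge] at h
    | none, none, none => rfl
  · intro x
    match x with
    | some i =>
      simp only [Ge]
      rw [if_neg (by simp [hone])]
      exact congrArg some (by linear_combination i * two_c)
    | none => rfl

lemma iq_exists (A : Type) [Fintype A] [DecidableEq A] (hA : 3 ≤ Fintype.card A) :
    ∃ g : A → A → A, (∀ x, Function.Bijective (g x)) ∧
      (∀ y, Function.Bijective (fun x => g x y)) ∧ (∀ x, g x x = x) := by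
  rcases Nat.even_or_odd (Fintype.card A) with he | ho
  · obtain ⟨m, hm⟩ := he
    have hm2 : 2 ≤ m := by omega
    obtain ⟨g0, h1, h2, h3⟩ := iq_even (m - 2)
    haveI : NeZero (2*(m-2)+3) := ⟨by omega⟩
    have e : Option (ZMod (2*(m-2)+3)) ≃ A := by
      apply Fintype.equivOfCardEq
      simp only [Fintype.card_option, ZMod.card]
      omega
    exact iq_transport e g0 h1 h2 h3
  · obtain ⟨m, hm⟩ := ho
    obtain ⟨g0, h1, h2, h3⟩ := iq_odd m
    haveI : NeZero (2*m+1) := ⟨by omega⟩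
    have e : ZMod (2*m+1) ≃ A := by
      apply Fintype.equivOfCardEq
      simp only [ZMod.card]
      omega
    exact iq_transport e g0 h1 h2 h3

theorem stmt_7 (A : Type) [Fintype A] [DecidableEq A]
    (hA : 3 ≤ Fintype.card A) :
    ∃ T : Multiset (Finset A),
      Multiset.card T = Fintype.card A ^ 2 - Fintype.card A ∧
      (∀ s ∈ T, s.card = 3) ∧
      (∀ a : A, T.countP (fun s => a ∈ s) = 3 * (Fintype.card A - 1)) ∧
      (∀ a b : A, a ≠ b → T.countP (fun s => a ∈ s ∧ b ∈ s) ≤ 6) := by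
  classical
  obtain ⟨g, hrow, hcol, hidem⟩ := iq_exists A hA
  haveI : Nonempty A := by
    have : 0 < Fintype.card A := by omega
    exact Fintype.card_pos_iff.1 this
  have hga : ∀ a b : A, a ≠ b → g a b ≠ a := by
    intro a b hab h
    exact hab ((hrow a).1 (h.trans (hidem a).symm)).symm
  have hgb : ∀ a b : A, a ≠ b → g a b ≠ b := by
    intro a b hab h
    have h2 : g a b = g b b := by rw [h, hidem b]
    exact hab ((hcol b).1 h2)
  set f : A × A → Finset A := fun p => {p.1, p.2, g p.1 p.2} with hf
  have hmemf : ∀ (x : A) (p : A × A), x ∈ f p ↔ (p.1 = x ∨ p.2 = x ∨ g p.1 p.2 = x) := by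
    intro x p
    simp only [hf, Finset.mem_insert, Finset.mem_singleton]
    constructor
    · rintro (h|h|h) <;> [exact Or.inl h.symm; exact Or.inr (Or.inl h.symm);
        exact Or.inr (Or.inr h.symm)]
    · rintro (h|h|h) <;> [exact Or.inl h.symm; exact Or.inr (Or.inl h.symm);
        exact Or.inr (Or.inr h.symm)]
  refine ⟨(Finset.univ.offDiag.val).map f, ?_, ?_, ?_, ?_⟩
  · rw [Multiset.card_map, ← Finset.card_def, Finset.offDiag_card, Finset.card_univ, pow_two]
  · intro s hs
    obtain ⟨p, hp, rfl⟩ := Multiset.mem_map.1 hs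
    have hp' : p ∈ Finset.univ.offDiag := hp
    have hne : p.1 ≠ p.2 := (Finset.mem_offDiag.1 hp').2.2
    have d1 : g p.1 p.2 ≠ p.1 := hga _ _ hne
    have d2 : g p.1 p.2 ≠ p.2 := hgb _ _ hne
    show ({p.1, p.2, g p.1 p.2} : Finset A).card = 3
    rw [Finset.card_insert_of_notMem (by simp [hne, Ne.symm d1]),
      Finset.card_insert_of_notMem (by simp [Ne.symm d2]), Finset.card_singleton]
  · intro a
    rw [Multiset.countP_map, ← Finset.filter_val, ← Finset.card_def]
    set S1 := Finset.univ.offDiag.filter (fun p : A × A => p.1 = a) with hS1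
    set S2 := Finset.univ.offDiag.filter (fun p : A × A => p.2 = a) with hS2
    set S3 := Finset.univ.offDiag.filter
      (fun p : A × A => p.1 ≠ a ∧ p.2 ≠ a ∧ g p.1 p.2 = a) with hS3
    have hsplit : Finset.univ.offDiag.filter (fun p => a ∈ f p) = S1 ∪ S2 ∪ S3 := by
      ext p
      simp only [hS1, hS2, hS3, Finset.mem_union, Finset.mem_filter, hmemf]
      constructor
      · rintro ⟨hp, (h|h|h)⟩
        · exact Or.inl (Or.inl ⟨hp, h⟩)
        · exact Or.inl (Or.inr ⟨hp, h⟩)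
        · by_cases h1 : p.1 = a
          · exact Or.inl (Or.inl ⟨hp, h1⟩)
          · by_cases h2 : p.2 = a
            · exact Or.inl (Or.inr ⟨hp, h2⟩)
            · exact Or.inr ⟨hp, h1, h2, h⟩
      · rintro ((⟨hp, h⟩|⟨hp, h⟩)|⟨hp, h1, h2, h3⟩)
        exacts [⟨hp, Or.inl h⟩, ⟨hp, Or.inr (Or.inl h)⟩, ⟨hp, Or.inr (Or.inr h3)⟩]
    have hd12 : Disjoint S1 S2 := by
      rw [Finset.disjoint_left]
      intro p h1 h2
      rw [hS1, Finset.mem_filter] at h1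
      rw [hS2, Finset.mem_filter] at h2
      exact (Finset.mem_offDiag.1 h1.1).2.2 (h1.2.trans h2.2.symm)
    have hd3 : Disjoint (S1 ∪ S2) S3 := by
      rw [Finset.disjoint_left]
      intro p h1 h3
      rw [hS3, Finset.mem_filter] at h3
      rcases Finset.mem_union.1 h1 with h | h
      · rw [hS1, Finset.mem_filter] at h; exact h3.2.1 h.2
      · rw [hS2, Finset.mem_filter] at h; exact h3.2.2.1 h.2
    have he : (Finset.univ.erase a).card = Fintype.card A - 1 := by
      rw [Finset.card_erase_of_mem (Finset.mem_univ a), Finset.card_univ]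
    have hc1 : S1.card = Fintype.card A - 1 := by
      rw [← he]
      · apply Finset.card_bij (fun p _ => p.2)
        · intro p hp
          rw [hS1, Finset.mem_filter] at hp
          have := (Finset.mem_offDiag.1 hp.1).2.2
          exact Finset.mem_erase.2 ⟨fun h => this (hp.2.trans h.symm), Finset.mem_univ _⟩
        · intro p hp q hq h
          rw [hS1, Finset.mem_filter] at hp hq
          exact Prod.ext (hp.2.trans hq.2.symm) h
        · intro b hb
          have hb' : b ≠ a := (Finset.mem_erase.1 hb).1
          refine ⟨(a, b), ?_, rfl⟩
          rw [hS1, Finset.mem_filter, Finset.mem_offDiag]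
          exact ⟨⟨Finset.mem_univ _, Finset.mem_univ _, fun h => hb' h.symm⟩, rfl⟩
    have hc2 : S2.card = Fintype.card A - 1 := by
      rw [← he]
      · apply Finset.card_bij (fun p _ => p.1)
        · intro p hp
          rw [hS2, Finset.mem_filter] at hp
          have := (Finset.mem_offDiag.1 hp.1).2.2
          exact Finset.mem_erase.2 ⟨fun h => this (h.trans hp.2.symm), Finset.mem_univ _⟩
        · intro p hp q hq h
          rw [hS2, Finset.mem_filter] at hp hq
          exact Prod.ext h (hp.2.trans hq.2.symm)
        · intro b hb
          have hb' : b ≠ a := (Finset.mem_erase.1 hb).1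
          refine ⟨(b, a), ?_, rfl⟩
          rw [hS2, Finset.mem_filter, Finset.mem_offDiag]
          exact ⟨⟨Finset.mem_univ _, Finset.mem_univ _, hb'⟩, rfl⟩
    have hc3 : S3.card = Fintype.card A - 1 := by
      rw [← he]
      · apply Finset.card_bij (fun p _ => p.1)
        · intro p hp
          rw [hS3, Finset.mem_filter] at hp
          exact Finset.mem_erase.2 ⟨hp.2.1, Finset.mem_univ _⟩
        · intro p hp q hq h
          rw [hS3, Finset.mem_filter] at hp hq
          have : g p.1 p.2 = g p.1 q.2 := by rw [hp.2.2.2, h, hq.2.2.2]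
          exact Prod.ext h ((hrow p.1).1 this)
        · intro b hb
          have hb' : b ≠ a := (Finset.mem_erase.1 hb).1
          obtain ⟨j, hj⟩ := (hrow b).2 a
          have hjb : j ≠ b := by
            intro h; rw [h, hidem b] at hj; exact hb' hj
          have hjA : j ≠ a := by
            intro h
            rw [h] at hj
            have : g b a = g a a := by rw [hj, hidem a]
            exact hb' ((hcol a).1 this)
          refine ⟨(b, j), ?_, rfl⟩
          rw [hS3, Finset.mem_filter, Finset.mem_offDiag]
          exact ⟨⟨Finset.mem_univ _, Finset.mem_univ _, fun h => hjb h.symm⟩, hb', hjA, hj⟩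
    rw [hsplit, Finset.card_union_of_disjoint hd3, Finset.card_union_of_disjoint hd12,
      hc1, hc2, hc3]
    omega
  · intro a b hab
    rw [Multiset.countP_map, ← Finset.filter_val, ← Finset.card_def]
    set ja := Function.invFun (g a) b with hjadef
    have hja : g a ja = b := Function.invFun_eq ((hrow a).2 b)
    set jb := Function.invFun (g b) a with hjbdef
    have hjb : g b jb = a := Function.invFun_eq ((hrow b).2 a)
    set ia := Function.invFun (fun x => g x a) b with hiadef
    have hia : g ia a = b := Function.invFun_eq ((hcol a).2 b)
    set ib := Function.invFun (fun x => g x b) a with hibdef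
    have hib : g ib b = a := Function.invFun_eq ((hcol b).2 a)
    set w : Fin 6 → A × A := ![(a,b),(b,a),(a,ja),(ia,a),(b,jb),(ib,b)] with hw
    calc (Finset.univ.offDiag.filter (fun p => a ∈ f p ∧ b ∈ f p)).card
        ≤ (Finset.univ : Finset (Fin 6)).card := by
          apply Finset.card_le_card_of_surjOn w
          intro p hp
          simp only [Finset.coe_filter, Set.mem_setOf_eq, Finset.mem_coe] at hp
          obtain ⟨hpo, hpa, hpb⟩ := hp
          obtain ⟨x, y⟩ := p
          have hne : x ≠ y := (Finset.mem_offDiag.1 hpo).2.2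
          rw [hmemf] at hpa hpb
          simp only at hpa hpb hne ⊢
          have goal : ∃ k : Fin 6, w k = (x, y) := by
            rcases hpa with h1|h1|h1
            · rcases hpb with h2|h2|h2
              · exact absurd (h1.symm.trans h2) hab
              · exact ⟨0, Prod.ext h1.symm h2.symm⟩
              · have h3 : g a y = b := by rw [← h1]; exact h2
                have h4 : y = ja := (hrow a).1 (h3.trans hja.symm)
                exact ⟨2, Prod.ext h1.symm h4.symm⟩
            · rcases hpb with h2|h2|h2
              · exact ⟨1, Prod.ext h2.symm h1.symm⟩
              · exact absurd (h1.symm.trans h2) hab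
              · have h3 : g x a = b := by rw [← h1]; exact h2
                have h4 : x = ia := (hcol a).1 (h3.trans hia.symm)
                exact ⟨3, Prod.ext h4.symm h1.symm⟩
            · rcases hpb with h2|h2|h2
              · have h3 : g b y = a := by rw [← h2]; exact h1
                have h4 : y = jb := (hrow b).1 (h3.trans hjb.symm)
                exact ⟨4, Prod.ext h2.symm h4.symm⟩
              · have h3 : g x b = a := by rw [← h2]; exact h1
                have h4 : x = ib := (hcol b).1 (h3.trans hib.symm)
                exact ⟨5, Prod.ext h4.symm h2.symm⟩
              · exact absurd (h1.symm.trans h2) hab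
          obtain ⟨k, hk⟩ := goal
          exact ⟨k, Finset.mem_coe.2 (Finset.mem_univ k), hk⟩
      _ = 6 := by simp
end

section
/- Let A ⊆ ℝ^h be compact, and let f : ℝ^m × A → ℝ be bounded and continuous, with f(·, y) differentiable in x for each fixed y ∈ A. Let y* : ℝ^m → A satisfy f(x, y*(x)) = max_{y ∈ A} f(x, y) for all x. Then for every ε > 0 there exists x* ∈ ℝ^m such that |∂f/∂xᵢ(x*, y*(x*))| ≤ ε for all i ∈ [m]. -/
open Set

theorem stmt_11 (m h : ℕ) (A : Set (Fin h → ℝ)) (hA : IsCompact A)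
    (f : (Fin m → ℝ) → (Fin h → ℝ) → ℝ)
    (hbdd : ∃ C : ℝ, ∀ x, ∀ y ∈ A, |f x y| ≤ C)
    (hcont : ContinuousOn (fun p : (Fin m → ℝ) × (Fin h → ℝ) => f p.1 p.2)
      (Set.univ ×ˢ A))
    (hdiff : ∀ y ∈ A, Differentiable ℝ (fun x => f x y))
    (ystar : (Fin m → ℝ) → (Fin h → ℝ))
    (hymem : ∀ x, ystar x ∈ A)
    (hymax : ∀ x, ∀ y ∈ A, f x y ≤ f x (ystar x))
    (ε : ℝ) (hε : 0 < ε) :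
    ∃ xstar : Fin m → ℝ, ∀ i : Fin m,
      |fderiv ℝ (fun x => f x (ystar xstar)) xstar (Pi.single i 1)| ≤ ε := by
  obtain ⟨C, hC⟩ := hbdd
  set g : (Fin m → ℝ) → ℝ := fun x => f x (ystar x) with hg
  -- continuity of g
  have gcont : Continuous g := by
    rw [Metric.continuous_iff]
    intro x₀ ε' hε'
    have hK : IsCompact (Metric.closedBall x₀ 1 ×ˢ A) :=
      (isCompact_closedBall x₀ 1).prod hA
    have hfK : ContinuousOn (fun p : (Fin m → ℝ) × (Fin h → ℝ) => f p.1 p.2)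
        (Metric.closedBall x₀ 1 ×ˢ A) :=
      hcont.mono (Set.prod_mono (Set.subset_univ _) le_rfl)
    have huc := hK.uniformContinuousOn_of_continuous hfK
    rw [Metric.uniformContinuousOn_iff] at huc
    obtain ⟨δ, hδ, hucd⟩ := huc ε' hε'
    refine ⟨min δ 1, lt_min hδ one_pos, fun x hx => ?_⟩
    have hx1 : dist x x₀ < 1 := lt_of_lt_of_le hx (min_le_right _ _)
    have hxδ : dist x x₀ < δ := lt_of_lt_of_le hx (min_le_left _ _)
    have hxball : x ∈ Metric.closedBall x₀ 1 := le_of_lt hx1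
    have hx₀ball : x₀ ∈ Metric.closedBall x₀ 1 := Metric.mem_closedBall_self zero_le_one
    have key : ∀ y ∈ A, dist (f x y) (f x₀ y) < ε' := by
      intro y hy
      have := hucd (x, y) ⟨hxball, hy⟩ (x₀, y) ⟨hx₀ball, hy⟩
      simp only [Prod.dist_eq, dist_self, max_eq_left dist_nonneg] at this
      exact this hxδ
    have h1 : g x - g x₀ < ε' := by
      have h1a : f x (ystar x) - f x₀ (ystar x) < ε' := by
        have := key _ (hymem x)
        rw [Real.dist_eq] at this
        exact lt_of_le_of_lt (le_abs_self _) this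
      have h1b : f x₀ (ystar x) ≤ g x₀ := hymax x₀ _ (hymem x)
      simp only [hg]; linarith
    have h2 : g x₀ - g x < ε' := by
      have h2a : f x₀ (ystar x₀) - f x (ystar x₀) < ε' := by
        have := key _ (hymem x₀)
        rw [Real.dist_eq, abs_sub_comm] at this
        exact lt_of_le_of_lt (le_abs_self _) this
      have h2b : f x (ystar x₀) ≤ g x := hymax x _ (hymem x₀)
      simp only [hg]; linarith
    rw [Real.dist_eq, abs_lt]
    constructor <;> linarith
  -- bounds
  have hgC : ∀ x, |g x| ≤ C := fun x => hC x _ (hymem x)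
  have hC0 : 0 ≤ C := le_trans (abs_nonneg _) (hgC 0)
  set x₀ : Fin m → ℝ := 0 with hx₀def
  set R : ℝ := (2 * C + 1) / ε with hR
  have hR0 : 0 ≤ R := div_nonneg (by linarith) hε.le
  set φ : (Fin m → ℝ) → ℝ := fun x => g x - ε * ‖x - x₀‖ with hφ
  have φcont : Continuous φ :=
    gcont.sub (continuous_const.mul ((continuous_id.sub continuous_const).norm))
  obtain ⟨xs, hxsmem, hxsmax⟩ :=
    (isCompact_closedBall x₀ R).exists_isMaxOn
      ⟨x₀, Metric.mem_closedBall_self hR0⟩ φcont.continuousOn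
  -- xs is a global max of φ
  have hglobal : ∀ x, φ x ≤ φ xs := by
    intro x
    by_cases hx : x ∈ Metric.closedBall x₀ R
    · exact hxsmax hx
    · have hxR : R < ‖x - x₀‖ := by
        rw [Metric.mem_closedBall, dist_eq_norm] at hx
        linarith [not_le.mp hx]
      have hεR : ε * R = 2 * C + 1 := by
        rw [hR, mul_div_cancel₀ _ (ne_of_gt hε)]
      have h1 : φ x ≤ C - ε * ‖x - x₀‖ := by
        have := (abs_le.mp (hgC x)).2
        simp only [hφ]; linarith
      have h2 : φ x₀ ≤ φ xs := hxsmax (Metric.mem_closedBall_self hR0)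
      have h3 : φ x₀ = g x₀ := by simp [hφ]
      have h4 : -C ≤ g x₀ := (abs_le.mp (hgC x₀)).1
      have h5 : ε * R ≤ ε * ‖x - x₀‖ := by
        exact mul_le_mul_of_nonneg_left hxR.le hε.le
      linarith
  -- key inequality: g x ≤ g xs + ε * ‖x - xs‖
  have hkey : ∀ x, g x ≤ g xs + ε * ‖x - xs‖ := by
    intro x
    have h1 : g x - ε * ‖x - x₀‖ ≤ g xs - ε * ‖xs - x₀‖ := hglobal x
    have h2' : ‖x - x₀‖ - ‖xs - x₀‖ ≤ ‖x - xs‖ := by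
      have e1 : x - x₀ = (x - xs) + (xs - x₀) := by ring
      have := norm_add_le (x - xs) (xs - x₀)
      rw [← e1] at this
      linarith
    nlinarith [mul_le_mul_of_nonneg_left h2' hε.le]
  refine ⟨xs, fun i => ?_⟩
  set y : Fin h → ℝ := ystar xs with hy
  set v : Fin m → ℝ := Pi.single i 1 with hv
  have hvnorm : ‖v‖ = 1 := by
    rw [hv, Pi.norm_single]; exact norm_one
  set d : ℝ := fderiv ℝ (fun x => f x y) xs v with hd
  -- φt t = f (xs + t • v) y has derivative d at 0
  have hline : HasDerivAt (fun t : ℝ => xs + t • v) v 0 := by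
    have : HasDerivAt (fun t : ℝ => t • v) ((1:ℝ) • v) 0 :=
      (hasDerivAt_id (0:ℝ)).smul_const v
    simpa using this.const_add xs
  have hfd : HasFDerivAt (fun x => f x y) (fderiv ℝ (fun x => f x y) xs) xs :=
    ((hdiff y (hymem xs)) xs).hasFDerivAt
  have hφt : HasDerivAt (fun t : ℝ => f (xs + t • v) y) d 0 := by
    have hfd' : HasFDerivAt (fun x => f x y) (fderiv ℝ (fun x => f x y) xs)
        (xs + (0:ℝ) • v) := by simpa using hfd
    exact hfd'.comp_hasDerivAt 0 hline
  -- slope bounds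
  have hub : ∀ t : ℝ, f (xs + t • v) y - f xs y ≤ ε * |t| := by
    intro t
    have h1 : f (xs + t • v) y ≤ g (xs + t • v) := hymax _ _ (hymem xs)
    have h2 : g (xs + t • v) ≤ g xs + ε * ‖xs + t • v - xs‖ := hkey _
    have h3 : ‖xs + t • v - xs‖ = |t| := by
      have : xs + t • v - xs = t • v := by abel
      rw [this, norm_smul, hvnorm, Real.norm_eq_abs, mul_one]
    have h4 : g xs = f xs y := rfl
    rw [h3] at h2
    linarith
  have hslope := hasDerivAt_iff_tendsto_slope.mp hφt
  have hdle : d ≤ ε := by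
    have htend : Filter.Tendsto (slope (fun t : ℝ => f (xs + t • v) y) 0)
        (nhdsWithin 0 (Set.Ioi 0)) (nhds d) :=
      hslope.mono_left (nhdsWithin_mono 0 (fun t ht => ne_of_gt ht))
    refine le_of_tendsto htend ?_
    filter_upwards [self_mem_nhdsWithin] with t ht
    have ht0 : (0:ℝ) < t := ht
    rw [slope_def_field]
    have := hub t
    rw [abs_of_pos ht0] at this
    simp only [zero_smul, add_zero, sub_zero]
    rw [div_le_iff₀ ht0]
    linarith
  have hdge : -ε ≤ d := by
    have htend : Filter.Tendsto (slope (fun t : ℝ => f (xs + t • v) y) 0)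
        (nhdsWithin 0 (Set.Iio 0)) (nhds d) :=
      hslope.mono_left (nhdsWithin_mono 0 (fun t ht => ne_of_lt ht))
    refine ge_of_tendsto htend ?_
    filter_upwards [self_mem_nhdsWithin] with t ht
    have ht0 : t < (0:ℝ) := ht
    rw [slope_def_field]
    have := hub t
    rw [abs_of_neg ht0] at this
    simp only [zero_smul, add_zero, sub_zero]
    rw [le_div_iff_of_neg ht0]
    nlinarith
  exact abs_le.mpr ⟨hdge, hdle⟩
end

section
/- Let V₁,…,V_n ⊆ ℝ^ℓ be subspaces with V₁ + ⋯ + V_n = ℝ^ℓ, let kᵢ = dim Vᵢ, fix bases {v_{i1},…,v_{ik_i}} of each Vᵢ, and let γ ∈ ℝ^m (m = Σkᵢ) with γ_{ij} = pᵢ where p ∈ ℝⁿ lies in the convex hull of indicators of admissible basis sets. Then the function f(t, R₁,…,R_n) = ⟨γ, t⟩ − ln det(Σ_{i,j} e^{t_{ij}} x_{ij}x_{ij}ᵀ), where [x_{i1},…,x_{ik_i}] = [v_{i1},…,v_{ik_i}]Rᵢ with Rᵢ ∈ O(kᵢ), is bounded above by a constant independent of t and the Rᵢ. -/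
/-!
For an admissible basis set `H`, the vectors `x_{ij}` with `i ∈ H` form a basis of `ℝ^ℓ`, so the
part of `M = ∑ e^{t_{ij}} x_{ij} x_{ij}ᵀ` indexed by `H` has determinant
`e^{∑_{i ∈ H} t_{ij}} · det(∑_{i ∈ H} v_{ij} v_{ij}ᵀ)`: the orthogonal matrices `Rᵢ` drop out. Since
adding positive semidefinite matrices can only increase the determinant,
`⟨1_H, t⟩ - log det M` is bounded above. The set of `p` for which `⟨p, t⟩ - log det M` is bounded
above is convex, hence contains the convex hull of the admissible basis vectors.
-/

open Finset Matrix

section Determinant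

variable {m : Type*} [Fintype m]

lemma posSemidef_smul_vecMulVec_self {c : ℝ} (hc : 0 ≤ c) (x : m → ℝ) :
    (c • vecMulVec x x).PosSemidef := by
  simpa using (posSemidef_vecMulVec_self_star x).smul hc

variable [DecidableEq m]

lemma one_le_det_one_add {C : Matrix m m ℝ} (hC : C.PosSemidef) : 1 ≤ (1 + C).det := by
  conv_rhs => rw [hC.isHermitian.spectral_theorem, ← map_one (Unitary.conjStarAlgAut ℝ _ _),
    ← map_add, Unitary.conjStarAlgAut_apply, det_mul, det_mul, mul_right_comm, ← det_mul]
  simp only [SetLike.coe_mem, Unitary.mul_star_self_of_mem, det_one, RCLike.ofReal_real_eq_id,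
    CompTriple.comp_eq, one_mul]
  rw [← diagonal_one, diagonal_add, det_diagonal]
  exact one_le_prod fun i _ => le_add_of_nonneg_right (hC.eigenvalues_nonneg i)

open scoped MatrixOrder in
lemma det_le_det_add {A B : Matrix m m ℝ} (hA : A.PosSemidef) (hB : B.PosSemidef) :
    A.det ≤ (A + B).det := by
  obtain ⟨S, hS, rfl⟩ : ∃ S : Matrix m m ℝ, S.PosSemidef ∧ S * S = A :=
    ⟨CFC.sqrt A, (CFC.sqrt_nonneg A).posSemidef, CFC.sqrt_mul_sqrt_self A hA.nonneg⟩
  rcases eq_or_ne S.det 0 with h0 | h0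
  · simpa [det_mul, h0] using (hA.add hB).det_nonneg
  have hSu : IsUnit S.det := isUnit_iff_ne_zero.2 h0
  have hfactor : S * S + B = S * (1 + S⁻¹ * B * S⁻¹) * S := by
    rw [Matrix.mul_add, Matrix.add_mul, mul_one, ← Matrix.mul_assoc,
      mul_nonsing_inv_cancel_left _ _ hSu, nonsing_inv_mul_cancel_right _ _ hSu]
  have hC : (S⁻¹ * B * S⁻¹).PosSemidef := by
    have := hB.mul_mul_conjTranspose_same S⁻¹
    rwa [conjTranspose_nonsing_inv, hS.1.eq] at this
  rw [hfactor, det_mul, det_mul, det_mul]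
  nlinarith [one_le_det_one_add hC, mul_self_nonneg S.det]

end Determinant

section Frame

variable {m ι : Type*} [Fintype m] [DecidableEq m] [Fintype ι]

lemma sum_smul_vecMulVec_self_eq (e : ι ≃ m) (c : ι → ℝ) (x : ι → m → ℝ) :
    ∑ d, c d • vecMulVec (x d) (x d) =
      ((of x).submatrix e.symm id)ᵀ * diagonal (fun b => c (e.symm b)) *
        (of x).submatrix e.symm id := by
  ext a b
  rw [mul_apply, ← e.symm.sum_comp]
  simp only [Matrix.sum_apply, Matrix.smul_apply, vecMulVec_apply, mul_diagonal,
    transpose_apply, submatrix_apply, of_apply, id, smul_eq_mul]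
  exact sum_congr rfl fun d _ => by ring

lemma det_sum_smul_vecMulVec_self (e : ι ≃ m) (c : ι → ℝ) (x : ι → m → ℝ) :
    det (∑ d, c d • vecMulVec (x d) (x d)) =
      (∏ d, c d) * det ((of x).submatrix e.symm id) ^ 2 := by
  rw [sum_smul_vecMulVec_self_eq e, det_mul, det_mul, det_transpose, det_diagonal,
    e.symm.prod_comp c]
  ring

lemma det_sum_vecMulVec_self (e : ι ≃ m) (x : ι → m → ℝ) :
    det (∑ d, vecMulVec (x d) (x d)) = det ((of x).submatrix e.symm id) ^ 2 := by
  simpa using det_sum_smul_vecMulVec_self e 1 x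

lemma det_sum_smul_vecMulVec_self_eq_prod_mul (h : Fintype.card ι = Fintype.card m)
    (c : ι → ℝ) (x : ι → m → ℝ) :
    det (∑ d, c d • vecMulVec (x d) (x d)) = (∏ d, c d) * det (∑ d, vecMulVec (x d) (x d)) := by
  obtain ⟨e⟩ := Fintype.card_eq.1 h
  rw [det_sum_smul_vecMulVec_self e, det_sum_vecMulVec_self e]

lemma det_sum_vecMulVec_self_pos (h : Fintype.card ι = Fintype.card m) {x : ι → m → ℝ}
    (hx : LinearIndependent ℝ x) : 0 < det (∑ d, vecMulVec (x d) (x d)) := by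
  obtain ⟨e⟩ := Fintype.card_eq.1 h
  have hX : IsUnit ((of x).submatrix e.symm id) :=
    linearIndependent_rows_iff_isUnit.1 (hx.comp e.symm e.symm.injective)
  have := ((isUnit_iff_isUnit_det _).1 hX).ne_zero
  rw [det_sum_vecMulVec_self e]
  positivity

end Frame

section Orthogonal

variable {m κ : Type*} [Fintype κ]

lemma sum_vecMulVec_self_eq_transpose_mul (Y : Matrix κ m ℝ) :
    ∑ j, vecMulVec (Y j) (Y j) = Yᵀ * Y := by
  ext a b
  simp [Matrix.sum_apply, vecMulVec_apply, mul_apply]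

lemma sum_vecMulVec_orthogonal_combination [DecidableEq κ] {R : Matrix κ κ ℝ}
    (hR : R ∈ orthogonalGroup κ ℝ) (v : κ → m → ℝ) :
    ∑ j, vecMulVec (∑ j', R j' j • v j') (∑ j', R j' j • v j') = ∑ j, vecMulVec (v j) (v j) := by
  have hrow : ∀ j, ∑ j', R j' j • v j' = (Rᵀ * of v) j := fun j => by
    ext a
    simp [mul_apply, Finset.sum_apply]
  simp only [hrow, sum_vecMulVec_self_eq_transpose_mul]
  rw [transpose_mul, transpose_transpose, Matrix.mul_assoc, ← Matrix.mul_assoc R,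
    (mem_orthogonalGroup_iff _ _).1 hR, Matrix.one_mul, ← sum_vecMulVec_self_eq_transpose_mul]
  rfl

end Orthogonal

lemma convex_setOf_dotProduct_sub_le {α ι : Type*} [Fintype ι] (D : Set α) (φ : α → ι → ℝ)
    (g : α → ℝ) : Convex ℝ {p : ι → ℝ | ∃ C, ∀ z ∈ D, p ⬝ᵥ φ z - g z ≤ C} := by
  rintro p ⟨C, hC⟩ q ⟨C', hC'⟩ a b ha hb hab
  refine ⟨a * C + b * C', fun z hz => ?_⟩
  have hsplit : (a • p + b • q) ⬝ᵥ φ z - g z = a * (p ⬝ᵥ φ z - g z) + b * (q ⬝ᵥ φ z - g z) := by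
    rw [add_dotProduct, smul_dotProduct, smul_dotProduct, smul_eq_mul, smul_eq_mul]
    linear_combination g z * hab
  rw [hsplit]
  gcongr
  exacts [hC z hz, hC' z hz]

lemma Finset.sum_sigma_coe {ι M : Type*} {β : ι → Type*} [∀ i, Fintype (β i)] [AddCommMonoid M]
    (H : Finset ι) (f : (i : ι) → β i → M) :
    ∑ d : (i : H) × β i, f d.1 d.2 = ∑ i ∈ H, ∑ j, f i j :=
  (Fintype.sum_sigma _).trans (sum_coe_sort H fun i => ∑ j, f i j)

section AdmissibleBasis

variable {ι m : Type*} {V : ι → Submodule ℝ (m → ℝ)} {k : ι → ℕ} {H : Finset ι}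

lemma span_range_sigma_eq_top_of_admissible (v : (i : ι) → Fin (k i) → m → ℝ)
    (hspan : ∀ i, Submodule.span ℝ (Set.range (v i)) = V i) (hsup : (⨆ i ∈ H, V i) = ⊤) :
    Submodule.span ℝ (Set.range fun d : (i : H) × Fin (k i) => v d.1 d.2) = ⊤ := by
  rw [Set.range_sigma_eq_iUnion_range, Submodule.span_iUnion, ← hsup, iSup_subtype']
  simp only [hspan]

variable [Fintype m]

lemma card_sigma_eq_of_admissible (hk : ∀ i, Module.finrank ℝ (V i) = k i)
    (hfr : Module.finrank ℝ ↥(⨆ i ∈ H, V i) = ∑ i ∈ H, Module.finrank ℝ (V i))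
    (hsup : (⨆ i ∈ H, V i) = ⊤) :
    Fintype.card ((i : H) × Fin (k i)) = Fintype.card m := by
  rw [Fintype.card_sigma, ← Module.finrank_fintype_fun_eq_card ℝ, ← finrank_top ℝ, ← hsup, hfr]
  simp only [Fintype.card_fin, hk]
  exact sum_coe_sort H k

variable [DecidableEq m]

lemma det_sum_vecMulVec_pos_of_admissible (hk : ∀ i, Module.finrank ℝ (V i) = k i)
    (v : (i : ι) → Fin (k i) → m → ℝ) (hspan : ∀ i, Submodule.span ℝ (Set.range (v i)) = V i)
    (hfr : Module.finrank ℝ ↥(⨆ i ∈ H, V i) = ∑ i ∈ H, Module.finrank ℝ (V i))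
    (hsup : (⨆ i ∈ H, V i) = ⊤) :
    0 < det (∑ i ∈ H, ∑ j, vecMulVec (v i j) (v i j)) := by
  have hcard := card_sigma_eq_of_admissible hk hfr hsup
  have hli : LinearIndependent ℝ fun d : (i : H) × Fin (k i) => v d.1 d.2 :=
    linearIndependent_of_top_le_span_of_card_eq_finrank
      (span_range_sigma_eq_top_of_admissible v hspan hsup).ge
      (by rw [hcard, Module.finrank_fintype_fun_eq_card])
  simpa only [Finset.sum_sigma_coe H fun i j => vecMulVec (v i j) (v i j)]
    using det_sum_vecMulVec_self_pos hcard hli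

variable [Fintype ι] [DecidableEq ι]

lemma exp_mul_det_le_det_sum_exp_smul_vecMulVec {β : ι → Type*} [∀ i, Fintype (β i)]
    (hcard : Fintype.card ((i : H) × β i) = Fintype.card m)
    (x : (i : ι) → β i → m → ℝ) (t : (i : ι) → β i → ℝ) :
    Real.exp (∑ i ∈ H, ∑ j, t i j) * det (∑ i ∈ H, ∑ j, vecMulVec (x i j) (x i j)) ≤
      det (∑ i, ∑ j, Real.exp (t i j) • vecMulVec (x i j) (x i j)) := by
  have hpsd : ∀ s : Finset ι,
      (∑ i ∈ s, ∑ j, Real.exp (t i j) • vecMulVec (x i j) (x i j)).PosSemidef := fun s =>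
    posSemidef_sum s fun i _ => posSemidef_sum univ fun j _ =>
      posSemidef_smul_vecMulVec_self (Real.exp_pos _).le _
  have hH := det_sum_smul_vecMulVec_self_eq_prod_mul hcard
    (fun d => Real.exp (t d.1 d.2)) (fun d => x d.1 d.2)
  rw [← Real.exp_sum, Finset.sum_sigma_coe H t,
    Finset.sum_sigma_coe H fun i j => Real.exp (t i j) • vecMulVec (x i j) (x i j),
    Finset.sum_sigma_coe H fun i j => vecMulVec (x i j) (x i j)] at hH
  rw [← hH, ← sum_add_sum_compl H]
  exact det_le_det_add (hpsd H) (hpsd Hᶜ)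

lemma exists_sum_sub_log_det_le_of_admissible (hk : ∀ i, Module.finrank ℝ (V i) = k i)
    (v : (i : ι) → Fin (k i) → m → ℝ) (hspan : ∀ i, Submodule.span ℝ (Set.range (v i)) = V i)
    (hfr : Module.finrank ℝ ↥(⨆ i ∈ H, V i) = ∑ i ∈ H, Module.finrank ℝ (V i))
    (hsup : (⨆ i ∈ H, V i) = ⊤) :
    ∃ C : ℝ, ∀ (t : (i : ι) → Fin (k i) → ℝ) (R : (i : ι) → Matrix (Fin (k i)) (Fin (k i)) ℝ),
      (∀ i, R i ∈ orthogonalGroup (Fin (k i)) ℝ) →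
      ∑ i ∈ H, ∑ j, t i j - Real.log (det (∑ i, ∑ j, Real.exp (t i j) •
          vecMulVec (∑ j', R i j' j • v i j') (∑ j', R i j' j • v i j'))) ≤ C := by
  have hpos := det_sum_vecMulVec_pos_of_admissible hk v hspan hfr hsup
  refine ⟨-Real.log (det (∑ i ∈ H, ∑ j, vecMulVec (v i j) (v i j))), fun t R hR => ?_⟩
  have hle := exp_mul_det_le_det_sum_exp_smul_vecMulVec (card_sigma_eq_of_admissible hk hfr hsup)
    (fun i j => ∑ j', R i j' j • v i j') t
  simp only [sum_vecMulVec_orthogonal_combination (hR _)] at hle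
  have := Real.log_le_log (by positivity) hle
  rw [Real.log_mul (Real.exp_pos _).ne' hpos.ne', Real.log_exp] at this
  linarith

end AdmissibleBasis

theorem stmt_12_general (ℓ n : ℕ) (V : Fin n → Submodule ℝ (Fin ℓ → ℝ))
    (k : Fin n → ℕ) (hk : ∀ i, Module.finrank ℝ (V i) = k i)
    (v : (i : Fin n) → Fin (k i) → (Fin ℓ → ℝ))
    (hbasis : ∀ i, LinearIndependent ℝ (v i) ∧ Submodule.span ℝ (Set.range (v i)) = V i)
    (p : Fin n → ℝ)
    (hp : p ∈ convexHull ℝ {x : Fin n → ℝ | ∃ H : Finset (Fin n),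
      Module.finrank ℝ ↥(⨆ i ∈ H, V i) = ∑ i ∈ H, Module.finrank ℝ (V i) ∧
      (⨆ i ∈ H, V i) = ⊤ ∧
      x = fun i => if i ∈ H then (1 : ℝ) else 0}) :
    ∃ C : ℝ, ∀ (t : (i : Fin n) → Fin (k i) → ℝ)
      (R : (i : Fin n) → Matrix (Fin (k i)) (Fin (k i)) ℝ),
      (∀ i, R i ∈ Matrix.orthogonalGroup (Fin (k i)) ℝ) →
      (∑ i, ∑ j, p i * t i j) -
        Real.log (Matrix.det (∑ i, ∑ j, Real.exp (t i j) •
          Matrix.vecMulVec (∑ j', R i j' j • v i j') (∑ j', R i j' j • v i j'))) ≤ C := by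
  let D : Set (((i : Fin n) → Fin (k i) → ℝ) × ((i : Fin n) → Matrix (Fin (k i)) (Fin (k i)) ℝ)) :=
    {z | ∀ i, z.2 i ∈ orthogonalGroup (Fin (k i)) ℝ}
  have hconvex := convex_setOf_dotProduct_sub_le D (fun z i => ∑ j, z.1 i j)
    fun z => Real.log (det (∑ i, ∑ j, Real.exp (z.1 i j) •
      vecMulVec (∑ j', z.2 i j' j • v i j') (∑ j', z.2 i j' j • v i j')))
  refine (convexHull_min ?_ hconvex hp).imp fun C hC t R hR => ?_
  · rintro _ ⟨H, hfr, hsup, rfl⟩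
    obtain ⟨C, hC⟩ :=
      exists_sum_sub_log_det_le_of_admissible hk v (fun i => (hbasis i).2) hfr hsup
    refine ⟨C, fun z hz => ?_⟩
    simpa [dotProduct, ite_mul, sum_ite_mem] using hC z.1 z.2 hz
  · simpa only [dotProduct, mul_sum] using hC (t, R) hR

theorem stmt_12 (ℓ n : ℕ) (V : Fin n → Submodule ℝ (Fin ℓ → ℝ))
    (hspanall : (⨆ i, V i) = ⊤)
    (k : Fin n → ℕ) (hk : ∀ i, Module.finrank ℝ (V i) = k i)
    (v : (i : Fin n) → Fin (k i) → (Fin ℓ → ℝ))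
    (hmem : ∀ i j, v i j ∈ V i)
    (hbasis : ∀ i, LinearIndependent ℝ (v i) ∧ Submodule.span ℝ (Set.range (v i)) = V i)
    (p : Fin n → ℝ)
    (hp : p ∈ convexHull ℝ {x : Fin n → ℝ | ∃ H : Finset (Fin n),
      Module.finrank ℝ ↥(⨆ i ∈ H, V i) = ∑ i ∈ H, Module.finrank ℝ (V i) ∧
      (⨆ i ∈ H, V i) = ⊤ ∧
      x = fun i => if i ∈ H then (1 : ℝ) else 0}) :
    ∃ C : ℝ, ∀ (t : (i : Fin n) → Fin (k i) → ℝ)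
      (R : (i : Fin n) → Matrix (Fin (k i)) (Fin (k i)) ℝ),
      (∀ i, R i ∈ Matrix.orthogonalGroup (Fin (k i)) ℝ) →
      (∑ i, ∑ j, p i * t i j) -
        Real.log (Matrix.det (∑ i, ∑ j, Real.exp (t i j) •
          Matrix.vecMulVec (∑ j', R i j' j • v i j') (∑ j', R i j' j • v i j'))) ≤ C :=
  stmt_12_general ℓ n V k hk v hbasis p hp
end
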